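/- arXiv:2201.00078 — 2 statements merged into one kernel-verified Lean document; each statement's English description precedes it below -/
import Mathlib

section
/- For the explicit minimum size P3-hull set S of G(n,k) from the even case (l = n/(gcd(n,k)) even), the infecting time of S is n/2. -/
open SimpleGraph
open Fin.NatCast

def infectStep {V : Type*} (G : SimpleGraph V) (S : Set V) : Set V :=
  S ∪ {v | ∃ a b, a ≠ b ∧ a ∈ S ∧ b ∈ S ∧ G.Adj v a ∧ G.Adj v b}

def infectIter {V : Type*} (G : SimpleGraph V) (S : Set V) : ℕ → Set V
  | 0 => S
  | p + 1 => infectStep G (infectIter G S p)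

def IsHullSet {V : Type*} (G : SimpleGraph V) (S : Set V) : Prop :=
  ∃ p, infectIter G S p = Set.univ

noncomputable def hullNumber {V : Type*} (G : SimpleGraph V) : ℕ :=
  sInf {m | ∃ S : Set V, S.ncard = m ∧ IsHullSet G S}

noncomputable def infectTime {V : Type*} (G : SimpleGraph V) (S : Set V) : ℕ :=
  sInf {p | infectIter G S p = Set.univ}

def IsCubic {V : Type*} (G : SimpleGraph V) : Prop :=
  ∀ v, {w | G.Adj v w}.ncard = 3

def IsDecyclingSet {V : Type*} (G : SimpleGraph V) (S : Set V) : Prop :=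
  (G.induce Sᶜ).IsAcyclic

noncomputable def decyclingNumber {V : Type*} (G : SimpleGraph V) : ℕ :=
  sInf {m | ∃ S : Set V, S.ncard = m ∧ IsDecyclingSet G S}

def pHull {V : Type*} (G : SimpleGraph V) (S : Set V) : Set V :=
  ⋃ p, infectIter G S p

noncomputable def graphDiam {V : Type*} (G : SimpleGraph V) : ℕ :=
  sSup {d | ∃ a b, d = G.dist a b}

noncomputable def maxCompDiam {V : Type*} (G : SimpleGraph V) : ℕ :=
  sSup {d | ∃ c : G.ConnectedComponent, d = graphDiam (G.induce c.supp)}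

def genPetersen (n k : ℕ) [NeZero n] : SimpleGraph (Fin n ⊕ Fin n) :=
  SimpleGraph.fromRel fun x y =>
    match x, y with
    | Sum.inl i, Sum.inl j => j = i + 1
    | Sum.inl i, Sum.inr j => i = j
    | Sum.inr i, Sum.inr j => j = i + (k : Fin n)
    | _, _ => False

def Sv (n k : ℕ) [NeZero n] : Set (Fin n ⊕ Fin n) :=
  {x | ∃ i j : ℕ, i < n / Nat.gcd n k ∧ j < Nat.gcd n k ∧ Odd i ∧
    x = Sum.inr ((j + i * k : ℕ) : Fin n)}

def SuOdd (n c : ℕ) [NeZero n] : Set (Fin n ⊕ Fin n) :=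
  {Sum.inl ((c - 1 : ℕ) : Fin n)} ∪
    {x | ∃ j : ℕ, j < c ∧ Even j ∧ x = Sum.inl ((j : ℕ) : Fin n)}

/-!
Write `c = gcd n k` and `l = n / c`. The inner vertices form `c` cycles `v_j, v_{j+k}, …` of even
length `l`, and `S` takes every other vertex of each; concretely `v_m ∈ S` whenever `⌊m / c⌋` is
odd, and adding `k` flips the parity of `⌊m / c⌋`. Hence every inner vertex not in `S` has both
inner neighbours in `S`, and all inner vertices are infected at time `1`.

An outer vertex `u_m` has a single inner neighbour, so it can only be infected after one of
`u_{m ± 1}`: the outer infection spreads from `u_0` at speed one, and `u_{n/2}` needs time `n/2`.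
Conversely `v_{n-1} ∈ S`, so `u_{n-1}` is infected at time `1` along with all inner vertices, and
from then on the outer infection advances one step in each direction per round, covering the outer
cycle by time `n/2`.
-/

open Sum

section Infection

variable {V : Type*} {G : SimpleGraph V} {S : Set V}

lemma subset_infectStep : S ⊆ infectStep G S :=
  Set.subset_union_left

lemma mem_infectStep_of_adj {v a b : V} (hab : a ≠ b) (ha : a ∈ S) (hb : b ∈ S)
    (hva : G.Adj v a) (hvb : G.Adj v b) : v ∈ infectStep G S :=
  Or.inr ⟨a, b, hab, ha, hb, hva, hvb⟩

lemma infectIter_mono : Monotone (infectIter G S) :=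
  monotone_nat_of_le_succ fun _ => subset_infectStep

lemma infectTime_eq_of_forall_lt {p : ℕ} (hp : infectIter G S p = Set.univ)
    (hlt : ∀ q < p, infectIter G S q ≠ Set.univ) : infectTime G S = p :=
  le_antisymm (Nat.sInf_le hp) (le_csInf ⟨p, hp⟩ fun q hq => not_lt.1 fun h => hlt q h hq)

end Infection

section GcdParity

variable {n k : ℕ}

lemma gcd_mul_two_dvd_of_even_div_gcd (hl : Even (n / n.gcd k)) : n.gcd k * 2 ∣ n := by
  obtain ⟨r, hr⟩ := hl
  exact ⟨r, by rw [mul_assoc, two_mul, ← hr, Nat.mul_div_cancel' (Nat.gcd_dvd_left n k)]⟩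

lemma odd_div_gcd_of_even_div_gcd (hn : 0 < n) (hl : Even (n / n.gcd k)) :
    Odd (k / n.gcd k) := by
  refine Nat.not_even_iff_odd.1 fun hk => ?_
  exact Nat.not_coprime_of_dvd_of_dvd one_lt_two hl.two_dvd hk.two_dvd
    (Nat.coprime_div_gcd_div_gcd (Nat.gcd_pos_of_pos_left k hn))

lemma ne_zero_of_even_div_gcd (hn : 0 < n) (hl : Even (n / n.gcd k)) : k ≠ 0 := by
  rintro rfl
  simp [Nat.div_self hn] at hl

lemma two_le_div_gcd_of_even_div_gcd (hn : 0 < n) (hl : Even (n / n.gcd k)) :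
    2 ≤ n / n.gcd k := by
  have : 0 < n / n.gcd k :=
    Nat.div_pos (Nat.gcd_le_left k hn) (Nat.gcd_pos_of_pos_left k hn)
  obtain ⟨r, hr⟩ := hl
  omega

lemma div_mod_two_eq_of_modEq {c x y : ℕ} (hc : c * 2 ∣ n) (h : x ≡ y [MOD n]) :
    x / c % 2 = y / c % 2 := by
  rw [← Nat.mod_mul_right_div_self, ← Nat.mod_mul_right_div_self, h.of_dvd hc]

lemma exists_odd_mod_add_mul_modEq {c l k' x : ℕ} (hcop : k'.Coprime l) (hl : Even l)
    (hl2 : 1 < l) (hx : Odd (x / c)) :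
    ∃ i < l, Odd i ∧ x % c + i * (c * k') ≡ x [MOD c * l] := by
  obtain ⟨a, -, ha⟩ := Nat.exists_mul_mod_eq_one_of_coprime hcop hl2
  have ha_odd : Odd a := by
    have : (k' * a) % 2 = 1 := by rw [← Nat.mod_mod_of_dvd _ hl.two_dvd, ha]; rfl
    exact (Nat.odd_mul.1 (Nat.odd_iff.2 this)).2
  refine ⟨a * (x / c) % l, Nat.mod_lt _ (by omega), ?_, ?_⟩
  · rw [Nat.odd_iff, Nat.mod_mod_of_dvd _ hl.two_dvd, ← Nat.odd_iff]
    exact ha_odd.mul hx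
  have hinv : k' * a ≡ 1 [MOD l] := by rw [Nat.ModEq, ha, Nat.mod_eq_of_lt hl2]
  have hi : a * (x / c) % l * k' ≡ x / c [MOD l] :=
    calc a * (x / c) % l * k' ≡ k' * a * (x / c) [MOD l] := by
          rw [mul_comm k' a, mul_right_comm]; exact (Nat.mod_modEq _ _).mul_right _
      _ ≡ 1 * (x / c) [MOD l] := hinv.mul_right _
      _ = x / c := one_mul _
  rw [← mul_assoc, mul_comm _ c, mul_assoc]
  conv_rhs => rw [← Nat.mod_add_div x c]
  exact (hi.mul_left' c).add_left _

end GcdParity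

section Sv

variable {n k : ℕ} [NeZero n]

lemma odd_val_add_div_gcd_iff (hl : Even (n / n.gcd k)) (w : Fin n) :
    Odd ((w + k).val / n.gcd k) ↔ Even (w.val / n.gcd k) := by
  have hmod : (w + k).val ≡ w.val + k [MOD n] := by
    rw [Fin.val_add, Fin.val_natCast]
    exact (Nat.mod_modEq _ _).trans ((Nat.mod_modEq k n).add_left _)
  have hpar := div_mod_two_eq_of_modEq (gcd_mul_two_dvd_of_even_div_gcd hl) hmod
  have hk := Nat.odd_iff.1 (odd_div_gcd_of_even_div_gcd (NeZero.pos n) hl)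
  rw [Nat.add_div_of_dvd_left (Nat.gcd_dvd_right n k)] at hpar
  rw [Nat.odd_iff, Nat.even_iff]
  omega

lemma inr_mem_Sv_of_odd (hl : Even (n / n.gcd k)) (m : Fin n) (hm : Odd (m.val / n.gcd k)) :
    inr m ∈ Sv n k := by
  have hc : 0 < n.gcd k := Nat.gcd_pos_of_pos_left k (NeZero.pos n)
  obtain ⟨i, hil, hi, hmod⟩ :=
    exists_odd_mod_add_mul_modEq (Nat.coprime_div_gcd_div_gcd hc).symm hl
      (two_le_div_gcd_of_even_div_gcd (NeZero.pos n) hl) hm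
  rw [Nat.mul_div_cancel' (Nat.gcd_dvd_left n k), Nat.mul_div_cancel' (Nat.gcd_dvd_right n k)]
    at hmod
  refine ⟨i, m.val % n.gcd k, hil, Nat.mod_lt _ hc, hi, ?_⟩
  exact congrArg inr (Fin.ext (by rw [Fin.val_natCast, hmod, Nat.mod_eq_of_lt m.isLt]))

lemma inr_neg_one_mem_Sv (hl : Even (n / n.gcd k)) : inr (-1) ∈ Sv n k := by
  have hc : 0 < n.gcd k := Nat.gcd_pos_of_pos_left k (NeZero.pos n)
  have hl2 := two_le_div_gcd_of_even_div_gcd (NeZero.pos n) hl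
  have hn2 : 2 ≤ n := hl2.trans (Nat.div_le_self _ _)
  have hnl : n / n.gcd k * n.gcd k = n := Nat.div_mul_cancel (Nat.gcd_dvd_left n k)
  refine inr_mem_Sv_of_odd hl _ ?_
  have hval : (-1 : Fin n).val = n - 1 := by
    rw [Fin.val_neg', Fin.val_one', Nat.mod_eq_of_lt (by omega : 1 < n),
      Nat.mod_eq_of_lt (by omega)]
  have hdiv : (n - 1) / n.gcd k = n / n.gcd k - 1 := by
    apply Nat.div_eq_of_lt_le
    · rw [Nat.sub_one_mul]; omega
    · rw [Nat.sub_add_cancel (by omega)]; omega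
  rw [hval, hdiv]
  exact Nat.Even.sub_odd (by omega) hl odd_one

end Sv

namespace Fin

variable {n : ℕ} [NeZero n]

def cyclicNorm (m : Fin n) : ℕ :=
  min m.val (n - m.val)

lemma val_add_one_eq_or (m : Fin n) :
    (m + 1).val = m.val + 1 ∨ (m + 1).val = 0 ∧ m.val + 1 = n := by
  rw [Fin.val_add, Fin.val_one', Nat.add_mod_mod]
  rcases Nat.lt_or_ge (m.val + 1) n with h | h
  · exact Or.inl (Nat.mod_eq_of_lt h)
  · have h : m.val + 1 = n := by omega
    exact Or.inr ⟨by rw [h, Nat.mod_self], h⟩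

lemma cyclicNorm_add_one_le (m : Fin n) : (m + 1).cyclicNorm ≤ m.cyclicNorm + 1 := by
  unfold cyclicNorm
  rcases val_add_one_eq_or m with h | h <;> omega

lemma cyclicNorm_le_cyclicNorm_add_one (m : Fin n) : m.cyclicNorm ≤ (m + 1).cyclicNorm + 1 := by
  unfold cyclicNorm
  rcases val_add_one_eq_or m with h | h <;> omega

lemma exists_eq_natCast_or_eq_neg_natCast_add_one (m : Fin n) :
    ∃ s : ℕ, 2 * s < n ∧ (m = s ∨ m = -((s : Fin n) + 1)) := by
  rcases lt_or_ge (2 * m.val) n with h | h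
  · exact ⟨m.val, h, Or.inl (Fin.cast_val_eq_self m).symm⟩
  refine ⟨n - 1 - m.val, by omega, Or.inr ?_⟩
  have : ((n - 1 - m.val : ℕ) : Fin n) + 1 = -m := by
    rw [← Nat.cast_add_one, show n - 1 - m.val + 1 = n - m.val by omega]
    exact Fin.ext (by rw [Fin.val_natCast, Fin.val_neg'])
  rw [this, neg_neg]

end Fin

namespace genPetersen

variable {n k : ℕ} [NeZero n] {S : Set (Fin n ⊕ Fin n)} {m : Fin n}

lemma eq_of_adj_inl {z : Fin n ⊕ Fin n} (h : (genPetersen n k).Adj (inl m) z) :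
    z = inl (m + 1) ∨ z = inl (m - 1) ∨ z = inr m := by
  rcases z with j | j <;> simp [genPetersen] at h
  · rcases h.2 with rfl | rfl <;> simp
  · simp [h]

lemma inl_mem_or_of_mem_infectStep (h : inl m ∈ infectStep (genPetersen n k) S) :
    inl m ∈ S ∨ inl (m + 1) ∈ S ∨ inl (m - 1) ∈ S := by
  rcases h with h | ⟨a, b, hab, ha, hb, hva, hvb⟩
  · exact Or.inl h
  rcases eq_of_adj_inl hva with rfl | rfl | rfl
  · exact Or.inr (Or.inl ha)
  · exact Or.inr (Or.inr ha)
  rcases eq_of_adj_inl hvb with rfl | rfl | rfl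
  · exact Or.inr (Or.inl hb)
  · exact Or.inr (Or.inr hb)
  · exact absurd rfl hab

lemma inl_add_one_mem_infectStep (h1 : (1 : Fin n) ≠ 0) (hm : inl m ∈ S)
    (hm' : inr (m + 1) ∈ S) : inl (m + 1) ∈ infectStep (genPetersen n k) S :=
  mem_infectStep_of_adj (by simp) hm hm' (by simp [genPetersen, h1]) (by simp [genPetersen])

lemma inl_sub_one_mem_infectStep (h1 : (1 : Fin n) ≠ 0) (hm : inl m ∈ S)
    (hm' : inr (m - 1) ∈ S) : inl (m - 1) ∈ infectStep (genPetersen n k) S :=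
  mem_infectStep_of_adj (by simp) hm hm' (by simp [genPetersen, h1]) (by simp [genPetersen])

lemma inr_mem_infectStep_of_add_of_sub (hk : (k : Fin n) + k ≠ 0) (h₁ : inr (m + k) ∈ S)
    (h₂ : inr (m - k) ∈ S) : inr m ∈ infectStep (genPetersen n k) S := by
  have hk0 : (k : Fin n) ≠ 0 := fun h => hk (by rw [h, add_zero])
  refine mem_infectStep_of_adj ?_ h₁ h₂ (by simp [genPetersen, hk0]) ?_
  · simp only [ne_eq, inr.injEq]
    exact fun h => hk (by open Fin.CommRing in linear_combination h)
  · simpa [genPetersen] using fun h => hk0 (sub_eq_self.1 h.symm)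

lemma inr_mem_infectStep (hl : Even (n / n.gcd k)) (hk : 2 * k < n) (hS : Sv n k ⊆ S)
    (m : Fin n) : inr m ∈ infectStep (genPetersen n k) S := by
  by_cases hm : Odd (m.val / n.gcd k)
  · exact subset_infectStep (hS (inr_mem_Sv_of_odd hl m hm))
  have hkk : (k : Fin n) + k ≠ 0 := by
    have hk0 := ne_zero_of_even_div_gcd (NeZero.pos n) hl
    intro h
    have := congrArg Fin.val h
    rw [Fin.val_add, Fin.val_natCast, Nat.mod_eq_of_lt (by omega : k < n),
      Nat.mod_eq_of_lt (by omega : k + k < n), Fin.val_zero] at this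
    omega
  refine inr_mem_infectStep_of_add_of_sub hkk (hS (inr_mem_Sv_of_odd hl _ ?_))
    (hS (inr_mem_Sv_of_odd hl _ ?_))
  · exact (odd_val_add_div_gcd_iff hl m).2 (Nat.not_odd_iff_even.1 hm)
  · have := odd_val_add_div_gcd_iff hl (m - k)
    rw [sub_add_cancel] at this
    exact Nat.not_even_iff_odd.1 (mt this.2 hm)

lemma cyclicNorm_le_of_inl_mem_infectIter (hS : ∀ m, inl m ∈ S → m = 0) {t : ℕ} {m : Fin n}
    (hm : inl m ∈ infectIter (genPetersen n k) S t) : m.cyclicNorm ≤ t := by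
  induction t generalizing m with
  | zero => simp [hS m hm, Fin.cyclicNorm]
  | succ t ih =>
    rcases inl_mem_or_of_mem_infectStep hm with h | h | h
    · exact (ih h).trans t.le_succ
    · have := m.cyclicNorm_le_cyclicNorm_add_one
      have := ih h
      omega
    · have := (m - 1).cyclicNorm_add_one_le
      rw [sub_add_cancel] at this
      have := ih h
      omega

lemma inl_natCast_mem_infectIter (h1 : (1 : Fin n) ≠ 0)
    (hinr : ∀ m, inr m ∈ infectIter (genPetersen n k) S 1) (h₀ : inl 0 ∈ S)
    (h₁ : inr (-1) ∈ S) (s : ℕ) :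
    inl (s : Fin n) ∈ infectIter (genPetersen n k) S (s + 1) ∧
      inl (-((s : Fin n) + 1)) ∈ infectIter (genPetersen n k) S (s + 1) := by
  induction s with
  | zero =>
    refine ⟨subset_infectStep (by rw [Nat.cast_zero]; exact h₀), ?_⟩
    show inl (-(((0 : ℕ) : Fin n) + 1)) ∈ infectStep (genPetersen n k) S
    simpa using inl_sub_one_mem_infectStep h1 h₀ (by rwa [zero_sub])
  | succ s ih =>
    have hinr' m : inr m ∈ infectIter (genPetersen n k) S (s + 1) :=
      infectIter_mono (by omega) (hinr m)
    constructor
    · rw [Nat.cast_succ]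
      exact inl_add_one_mem_infectStep h1 ih.1 (hinr' _)
    · rw [show -(((s + 1 : ℕ) : Fin n) + 1) = -((s : Fin n) + 1) - 1 by
        open Fin.CommRing in push_cast; ring]
      exact inl_sub_one_mem_infectStep h1 ih.2 (hinr' _)

end genPetersen

open genPetersen in
theorem stmt11_general (n k : ℕ) [NeZero n] (hk2 : 2 * k < n)
    (hl : Even (n / Nat.gcd n k)) :
    infectTime (genPetersen n k) ({Sum.inl 0} ∪ Sv n k) = n / 2 := by
  obtain ⟨r, hr⟩ : Even n :=
    even_iff_two_dvd.2 ((dvd_mul_left 2 _).trans (gcd_mul_two_dvd_of_even_div_gcd hl))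
  have h1 : (1 : Fin n) ≠ 0 := fun h => by
    have := congrArg Fin.val h
    rw [Fin.val_one', Fin.val_zero, Nat.mod_eq_of_lt (by omega)] at this
    omega
  have hinr m : inr m ∈ infectIter (genPetersen n k) ({inl 0} ∪ Sv n k) 1 :=
    inr_mem_infectStep hl hk2 Set.subset_union_right m
  have hinl := inl_natCast_mem_infectIter h1 hinr (Or.inl rfl) (Or.inr (inr_neg_one_mem_Sv hl))
  refine infectTime_eq_of_forall_lt (Set.eq_univ_of_forall ?_) fun q hq hall => ?_
  · rintro (m | m)
    · obtain ⟨s, hs, rfl | rfl⟩ := m.exists_eq_natCast_or_eq_neg_natCast_add_one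
      · exact infectIter_mono (by omega) (hinl s).1
      · exact infectIter_mono (by omega) (hinl s).2
    · exact infectIter_mono (by omega) (hinr m)
  · have hS m (hm : inl m ∈ ({inl 0} ∪ Sv n k : Set (Fin n ⊕ Fin n))) : m = 0 := by
      rcases hm with hm | ⟨_, _, -, -, -, hm⟩
      · exact inl_injective hm
      · exact absurd hm inl_ne_inr
    have hmid : inl (⟨n / 2, by omega⟩ : Fin n) ∈ infectIter (genPetersen n k) _ q :=
      hall ▸ Set.mem_univ _
    have := cyclicNorm_le_of_inl_mem_infectIter hS hmid
    simp only [Fin.cyclicNorm] at this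
    omega

theorem stmt11 (n k : ℕ) [NeZero n] (hk1 : 1 ≤ k) (hk2 : 2 * k < n)
    (hl : Even (n / Nat.gcd n k)) :
    infectTime (genPetersen n k) ({Sum.inl 0} ∪ Sv n k) = n / 2 :=
  stmt11_general n k hk2 hl
end

section
/- Let σ ∈ S_n be a product of disjoint cycles of length ≥ 3 with exactly k odd-length cycles, and suppose GGP(n,σ) contains a path of k consecutive exterior vertices u_{j}, u_{j+1}, …, u_{j+k−1} such that each u_{j+i} is joined by a spoke to a vertex of a different odd interior cycle. Then the P3-hull number of GGP(n,σ) equals ⌈(n+1)/2⌉. -/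
open SimpleGraph
open Fin.NatCast

def GGP (n : ℕ) [NeZero n] (σ : Equiv.Perm (Fin n)) : SimpleGraph (Fin n ⊕ Fin n) :=
  SimpleGraph.fromRel fun x y =>
    match x, y with
    | Sum.inl i, Sum.inl j => j = i + 1
    | Sum.inl i, Sum.inr j => i = j
    | Sum.inr i, Sum.inr j => j = σ i
    | _, _ => False


/-!
Lower bound: in a cubic graph let `I(S)` count the ordered pairs of adjacent vertices of `S`.
Infecting a vertex with at least two infected neighbours raises `I` by at least `4` and `|S|` by
`1`, and the last infection, whose three neighbours are all infected, raises `I` by `6`. As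
`I(V) = 3|V|`, every hull set `S ≠ V` satisfies `|V| + 2 + I(S) ≤ 4|S|`, so `2|S| ≥ n + 1`
when `|V| = 2n`.

Upper bound: on every interior cycle `c` pick a base point `β c`, the end of the spoke from the
exterior path `u_j, …, u_{j+k-1}` when `c` is odd, and seed the `⌊|c| / 2⌋` vertices
`σ^(2t+1) (β c)`; on the path seed `u_j, u_{j+2}, …`, `⌊k / 2⌋ + 1` vertices. Since there are
exactly `k` odd cycles, that is `(n - k) / 2 + ⌊k / 2⌋ + 1 = ⌊(n + 2) / 2⌋` seeds. They infect
the rest of the path, then every interior cycle (an odd one once its base point is infected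
through its spoke), and finally the exterior cycle, one vertex after another starting at `u_j`.
-/

section Infection

variable {V : Type*} (G : SimpleGraph V)

lemma infectStep_mono {S T : Set V} (h : S ⊆ T) : infectStep G S ⊆ infectStep G T :=
  Set.union_subset_union h fun _ ⟨a, b, hab, ha, hb, hva, hvb⟩ => ⟨a, b, hab, h ha, h hb, hva, hvb⟩

lemma infectIter_mono_s19 {S T : Set V} (h : S ⊆ T) (p : ℕ) :
    infectIter G S p ⊆ infectIter G T p := by
  induction p with
  | zero => exact h
  | succ p ih => exact infectStep_mono G ih

lemma infectIter_monotone (S : Set V) : Monotone (infectIter G S) :=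
  monotone_nat_of_le_succ fun _ => Set.subset_union_left

lemma infectIter_eq_self {S : Set V} (h : infectStep G S = S) (p : ℕ) : infectIter G S p = S := by
  induction p with
  | zero => rfl
  | succ p ih => rw [infectIter, ih, h]

lemma IsHullSet.mono {S T : Set V} (h : S ⊆ T) (hS : IsHullSet G S) : IsHullSet G T :=
  let ⟨p, hp⟩ := hS
  ⟨p, Set.eq_univ_of_univ_subset (hp ▸ infectIter_mono_s19 G h p)⟩

lemma subset_pHull (S : Set V) : S ⊆ pHull G S :=
  Set.subset_iUnion_of_subset 0 subset_rfl

lemma mem_pHull_of_adj {S : Set V} {v a b : V} (hab : a ≠ b) (ha : a ∈ pHull G S)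
    (hb : b ∈ pHull G S) (hva : G.Adj v a) (hvb : G.Adj v b) : v ∈ pHull G S := by
  obtain ⟨p, hp⟩ := Set.mem_iUnion.mp ha
  obtain ⟨q, hq⟩ := Set.mem_iUnion.mp hb
  refine Set.mem_iUnion.mpr ⟨max p q + 1, Or.inr ⟨a, b, hab, ?_, ?_, hva, hvb⟩⟩
  · exact infectIter_monotone G S (le_max_left p q) hp
  · exact infectIter_monotone G S (le_max_right p q) hq

lemma isHullSet_of_pHull_eq_univ [Finite V] {S : Set V} (h : pHull G S = Set.univ) :
    IsHullSet G S := by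
  have hmem (v : V) : ∃ p, v ∈ infectIter G S p := by
    rw [← Set.mem_iUnion, ← pHull, h]
    exact Set.mem_univ v
  choose time htime using hmem
  cases nonempty_fintype V
  refine ⟨Finset.univ.sup time, Set.eq_univ_of_forall fun v => ?_⟩
  exact infectIter_monotone G S (Finset.le_sup (Finset.mem_univ v)) (htime v)

lemma IsHullSet.exists_mem_infectStep_diff {S : Set V} (hS : IsHullSet G S)
    (hne : S ≠ Set.univ) : ∃ v ∉ S, v ∈ infectStep G S := by
  by_contra! h
  obtain ⟨p, hp⟩ := hS
  have hstable : infectStep G S = S :=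
    Set.Subset.antisymm (fun v hv => by_contra fun hvS => h v hvS hv) Set.subset_union_left
  exact hne (infectIter_eq_self G hstable p ▸ hp)

lemma hullNumber_eq_of_forall {m : ℕ} (hm : m ≤ Nat.card V)
    (hup : ∃ S : Set V, S.ncard ≤ m ∧ IsHullSet G S)
    (hlow : ∀ S : Set V, IsHullSet G S → m ≤ S.ncard) : hullNumber G = m := by
  obtain ⟨S, hSm, hS⟩ := hup
  obtain ⟨T, hST, -, hT⟩ :=
    Set.exists_subsuperset_card_eq (Set.subset_univ S) hSm (by rwa [Set.ncard_univ])
  refine le_antisymm (Nat.sInf_le ⟨T, hT, hS.mono G hST⟩) (le_csInf ⟨_, T, hT, hS.mono G hST⟩ ?_)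
  rintro _ ⟨U, rfl, hU⟩
  exact hlow U hU

end Infection

section CubicLowerBound

open Finset

variable {V : Type*} [Fintype V] [DecidableEq V] (G : SimpleGraph V) [DecidableRel G.Adj]

def innerDegreeSum (S : Finset V) : ℕ := ∑ v ∈ S, #(G.neighborFinset v ∩ S)

lemma innerDegreeSum_insert {S : Finset V} {v : V} (hv : v ∉ S) :
    innerDegreeSum G (insert v S) = innerDegreeSum G S + 2 * #(G.neighborFinset v ∩ S) := by
  have hterm (w : V) (hw : w ∈ S) : #(G.neighborFinset w ∩ insert v S) =
      #(G.neighborFinset w ∩ S) + if w ∈ G.neighborFinset v then 1 else 0 := by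
    by_cases hvw : v ∈ G.neighborFinset w
    · have hwv : w ∈ G.neighborFinset v := by simpa [adj_comm] using hvw
      rw [inter_insert_of_mem hvw, card_insert_of_notMem fun h => hv (mem_inter.mp h).2,
        if_pos hwv]
    · have hwv : w ∉ G.neighborFinset v := by simpa [adj_comm] using hvw
      rw [inter_insert_of_notMem hvw, if_neg hwv, add_zero]
  rw [innerDegreeSum, sum_insert hv, inter_insert_of_notMem (G.notMem_neighborFinset_self v),
    sum_congr rfl hterm, sum_add_distrib, ← card_filter, filter_mem_eq_inter, innerDegreeSum,
    inter_comm S]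
  ring

lemma innerDegreeSum_univ (hG : G.IsRegularOfDegree 3) :
    innerDegreeSum G univ = 3 * Fintype.card V := by
  simp [innerDegreeSum, hG _, mul_comm]

lemma IsHullSet.exists_insert {S : Finset V} (hS : IsHullSet G ↑S) (hne : S ≠ univ) :
    ∃ v ∉ S, 2 ≤ #(G.neighborFinset v ∩ S) ∧ IsHullSet G ↑(insert v S) := by
  obtain ⟨v, hvS, hv⟩ := hS.exists_mem_infectStep_diff G (by simpa using hne)
  obtain ⟨a, b, hab, ha, hb, hva, hvb⟩ := hv.resolve_left hvS
  refine ⟨v, hvS, ?_, hS.mono G (by simp)⟩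
  calc 2 = #{a, b} := (card_pair hab).symm
    _ ≤ #(G.neighborFinset v ∩ S) :=
      card_le_card (by simp_all [insert_subset_iff])

lemma IsHullSet.card_add_innerDegreeSum_le (hG : G.IsRegularOfDegree 3) :
    ∀ t (S : Finset V), #Sᶜ = t + 1 → IsHullSet G ↑S →
      Fintype.card V + 2 + innerDegreeSum G S ≤ 4 * #S := by
  intro t
  induction t with
  | zero =>
    intro S hSc hS
    obtain ⟨v, hvS, -, -⟩ := hS.exists_insert G (by rintro rfl; simp at hSc)
    have hins : insert v S = univ := by
      rw [← compl_eq_empty_iff, ← card_eq_zero, compl_insert, card_erase_of_mem (by simpa), hSc]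
    have hnbr : G.neighborFinset v ∩ S = G.neighborFinset v := by
      refine inter_eq_left.mpr fun w hw => ?_
      have hwv : w ≠ v := G.ne_of_adj ((G.mem_neighborFinset v w).mp hw) |>.symm
      have hw' : w ∈ insert v S := hins ▸ mem_univ w
      simpa [hwv] using hw'
    have hsum := innerDegreeSum_insert G hvS
    rw [hins, hnbr, card_neighborFinset_eq_degree, hG v, innerDegreeSum_univ G hG] at hsum
    have hcard : #S + 1 = Fintype.card V := by
      rw [← card_insert_of_notMem hvS, hins, card_univ]
    omega
  | succ t ih =>
    intro S hSc hS
    obtain ⟨v, hvS, hv2, hvhull⟩ := hS.exists_insert G (by rintro rfl; simp at hSc)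
    have hcard : #(insert v S)ᶜ = t + 1 := by
      rw [compl_insert, card_erase_of_mem (by simpa), hSc, Nat.add_sub_cancel]
    have := ih _ hcard hvhull
    rw [innerDegreeSum_insert G hvS, card_insert_of_notMem hvS] at this
    omega

lemma IsHullSet.card_add_two_le (hG : G.IsRegularOfDegree 3) {S : Finset V}
    (hS : IsHullSet G ↑S) (hne : S ≠ univ) : Fintype.card V + 2 ≤ 4 * #S := by
  have hpos : #Sᶜ ≠ 0 := by simpa using hne
  have := hS.card_add_innerDegreeSum_le G hG (#Sᶜ - 1) S (by omega)
  omega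

end CubicLowerBound

section Permutations

open Finset Equiv Equiv.Perm

lemma Multiset.two_mul_sum_map_div_two_add_card_filter_odd (s : Multiset ℕ) :
    2 * (s.map (· / 2)).sum + Multiset.card (s.filter Odd) = s.sum := by
  induction s using Multiset.induction_on with
  | empty => simp
  | cons a s ih =>
    rcases Nat.even_or_odd a with ha | ha
    · simp only [Multiset.map_cons, Multiset.sum_cons, Multiset.filter_cons_of_neg _
        (Nat.not_odd_iff_even.mpr ha)]
      have := Nat.even_iff.mp ha
      omega
    · simp only [Multiset.map_cons, Multiset.sum_cons, Multiset.filter_cons_of_pos _ ha,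
        Multiset.card_cons]
      have := Nat.odd_iff.mp ha
      omega

lemma Function.apply_ne_self_of_apply_apply_ne_self {α : Type*} {f : α → α}
    (hf : ∀ x, f (f x) ≠ x) (x : α) : f x ≠ x :=
  fun h => hf x (by rw [h, h])

variable {α : Type*} [Fintype α] [DecidableEq α] {σ : Perm α}

lemma Equiv.Perm.three_le_card_support_cycleOf (hσ : ∀ x, σ (σ x) ≠ x) (x : α) :
    3 ≤ #(σ.cycleOf x).support := by
  have h2 : 2 ≤ #(σ.cycleOf x).support :=
    two_le_card_support_cycleOf_iff.mpr (Function.apply_ne_self_of_apply_apply_ne_self hσ x)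
  refine lt_of_le_of_ne h2 fun hL2 => hσ x ?_
  have hmod := pow_mod_card_support_cycleOf_self_apply σ 2 x
  rwa [← hL2, Nat.mod_self, pow_zero, one_apply, sq, mul_apply, eq_comm] at hmod

lemma Equiv.Perm.apply_apply_ne_self (hlen : ∀ c ∈ σ.cycleType, 3 ≤ c) {x : α} (hx : σ x ≠ x) :
    σ (σ x) ≠ x := by
  intro h
  have hmem : #(σ.cycleOf x).support ∈ σ.cycleType :=
    cycleType_def σ ▸ Multiset.mem_map_of_mem _ (cycleOf_mem_cycleFactorsFinset_iff.mpr
      (mem_support.mpr hx))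
  have hcyc := isCycle_cycleOf σ hx
  have hsq : σ.cycleOf x ^ 2 = 1 := by
    rw [hcyc.pow_eq_one_iff' (by rwa [cycleOf_apply_self]), cycleOf_pow_apply_self, sq,
      mul_apply, h]
  have hdvd := orderOf_dvd_of_pow_eq_one hsq
  rw [hcyc.orderOf] at hdvd
  linarith [Nat.le_of_dvd two_pos hdvd, hlen _ hmem]

lemma Equiv.Perm.exists_mem_support_of_odd {x : ℕ → α} {k : ℕ}
    (hk : Multiset.card (σ.cycleType.filter Odd) ≤ k)
    (hodd : ∀ i < k, Odd #(σ.cycleOf (x i)).support)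
    (hdist : ∀ i₁ i₂ : ℕ, i₁ < k → i₂ < k → i₁ ≠ i₂ → σ.cycleOf (x i₁) ≠ σ.cycleOf (x i₂))
    {c : Perm α} (hc : c ∈ σ.cycleFactorsFinset) (hco : Odd #c.support) :
    ∃ i < k, x i ∈ c.support := by
  set oddCycles := σ.cycleFactorsFinset.filter fun c => Odd #c.support
  have hcard : #oddCycles ≤ k := by
    rwa [cycleType_def, Multiset.filter_map, Multiset.card_map] at hk
  have hsupp (i : ℕ) (hi : i < k) : x i ∈ σ.support :=
    mem_support.mpr (support_cycleOf_nonempty.mp (card_pos.mp (hodd i hi).pos))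
  have hsub : (range k).image (fun i => σ.cycleOf (x i)) ⊆ oddCycles := by
    simp only [image_subset_iff, mem_range]
    intro i hi
    exact mem_filter.mpr ⟨cycleOf_mem_cycleFactorsFinset_iff.mpr (hsupp i hi), hodd i hi⟩
  have hinj : Set.InjOn (fun i => σ.cycleOf (x i)) (range k) := fun i₁ hi₁ i₂ hi₂ h =>
    by_contra fun hne => hdist i₁ i₂ (mem_range.mp hi₁) (mem_range.mp hi₂) hne h
  have heq := eq_of_subset_of_card_le hsub (by rwa [card_image_of_injOn hinj, card_range])
  have hcodd : c ∈ oddCycles := mem_filter.mpr ⟨hc, hco⟩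
  obtain ⟨i, hi, rfl⟩ := mem_image.mp (heq ▸ hcodd)
  exact ⟨i, mem_range.mp hi,
    mem_support_cycleOf_iff.mpr ⟨SameCycle.refl _ _, hsupp i (mem_range.mp hi)⟩⟩

end Permutations

section GGPGraph

open Sum

variable {n : ℕ} [NeZero n] (σ : Equiv.Perm (Fin n))

lemma Fin.add_natCast_ne_self {m : ℕ} (hm0 : 0 < m) (hmn : m < n) (i : Fin n) :
    i + (m : Fin n) ≠ i := by
  intro h
  have hm : (m : Fin n) = 0 := by simpa using h
  rw [Fin.natCast_eq_zero] at hm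
  exact absurd (Nat.le_of_dvd hm0 hm) (by omega)

lemma GGP_adj_inl_inl_add_one (hn : 2 ≤ n) (i : Fin n) : (GGP n σ).Adj (inl i) (inl (i + 1)) := by
  refine ⟨fun h => ?_, Or.inl rfl⟩
  simpa using Fin.add_natCast_ne_self (m := 1) one_pos hn i (inl_injective h).symm

lemma GGP_adj_inl_inr (i : Fin n) : (GGP n σ).Adj (inl i) (inr i) :=
  ⟨inl_ne_inr, Or.inl rfl⟩

lemma GGP_adj_inr_inr_apply {i : Fin n} (hi : σ i ≠ i) : (GGP n σ).Adj (inr i) (inr (σ i)) :=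
  ⟨fun h => hi (inr_injective h).symm, Or.inl rfl⟩

lemma GGP_isRegularOfDegree_three [DecidableRel (GGP n σ).Adj] (hn : 3 ≤ n)
    (hσ : ∀ x, σ (σ x) ≠ x) : (GGP n σ).IsRegularOfDegree 3 := by
  rintro (i | i) <;> rw [← card_neighborFinset_eq_degree, Finset.card_eq_three]
  · have hne : i + 1 ≠ i - 1 := by
      intro h
      apply Fin.add_natCast_ne_self (m := 2) two_pos hn i
      calc i + ((2 : ℕ) : Fin n) = i + 1 + 1 := by rw [add_assoc, one_add_one_eq_two]; rfl
        _ = i := by rw [h, sub_add_cancel]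
    refine ⟨inl (i + 1), inl (i - 1), inr i, by simpa using hne, by simp, by simp, ?_⟩
    ext (w | w) <;> rw [mem_neighborFinset] <;> simp [GGP] <;> grind
  · have hne : σ i ≠ σ⁻¹ i := fun h => hσ (σ⁻¹ i) (by simpa using h)
    refine ⟨inr (σ i), inr (σ⁻¹ i), inl i, by simpa using hne, by simp, by simp, ?_⟩
    ext (w | w) <;> rw [mem_neighborFinset] <;> simp [GGP]
    grind

lemma le_ncard_of_isHullSet_GGP (hn : 3 ≤ n) (hσ : ∀ x, σ (σ x) ≠ x)
    {S : Set (Fin n ⊕ Fin n)} (hS : IsHullSet (GGP n σ) S) : (n + 2) / 2 ≤ S.ncard := by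
  classical
  obtain ⟨T, rfl⟩ := S.toFinite.exists_finset_coe
  rw [Set.ncard_coe_finset]
  rcases eq_or_ne T Finset.univ with rfl | hT
  · rw [Finset.card_univ, Fintype.card_sum, Fintype.card_fin]
    omega
  · have := hS.card_add_two_le _ (GGP_isRegularOfDegree_three σ hn hσ) hT
    rw [Fintype.card_sum, Fintype.card_fin] at this
    omega

end GGPGraph

section Seeds

open Finset Equiv Equiv.Perm Sum

def cycleSeeds {α : Type*} [Fintype α] [DecidableEq α] (σ : Perm α) (β : Perm α → α) :
    Finset α :=
  σ.cycleFactorsFinset.biUnion fun c =>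
    (range (#c.support / 2)).image fun t => (σ ^ (2 * t + 1)) (β c)

lemma card_cycleSeeds_le {α : Type*} [Fintype α] [DecidableEq α] (σ : Perm α) (β : Perm α → α) :
    #(cycleSeeds σ β) ≤ (σ.cycleType.map (· / 2)).sum := by
  calc #(cycleSeeds σ β) ≤ ∑ c ∈ σ.cycleFactorsFinset, #c.support / 2 :=
        card_biUnion_le.trans (sum_le_sum fun c _ => card_image_le.trans (card_range _).le)
    _ = (σ.cycleType.map (· / 2)).sum := by
        rw [cycleType_def, Multiset.map_map]; rfl

variable {n : ℕ} [NeZero n]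

def pathSeeds (j : Fin n) (k : ℕ) : Finset (Fin n) :=
  (range (k / 2 + 1)).image fun t => j + ((2 * t : ℕ) : Fin n)

variable {σ : Perm (Fin n)} {S : Set (Fin n ⊕ Fin n)}

lemma inl_add_mem_pHull (hn : 3 ≤ n) {j : Fin n} {k : ℕ}
    (hseeds : ∀ t, 2 * t ≤ k → inl (j + ((2 * t : ℕ) : Fin n)) ∈ pHull (GGP n σ) S)
    {m : ℕ} (hm : m < k) : inl (j + (m : Fin n)) ∈ pHull (GGP n σ) S := by
  obtain ⟨t, rfl | rfl⟩ := Nat.even_or_odd' m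
  · exact hseeds t (by omega)
  · have hprev : j + ((2 * t : ℕ) : Fin n) + 1 = j + ((2 * t + 1 : ℕ) : Fin n) := by
      rw [Nat.cast_succ, add_assoc]
    have hnext : j + ((2 * t + 1 : ℕ) : Fin n) + 1 = j + ((2 * (t + 1) : ℕ) : Fin n) := by
      rw [show 2 * (t + 1) = 2 * t + 1 + 1 by ring, Nat.cast_succ (2 * t + 1), add_assoc]
    refine mem_pHull_of_adj _ ?_ (hseeds t (by omega)) (hseeds (t + 1) (by omega)) ?_ ?_
    · intro h
      refine Fin.add_natCast_ne_self (m := 2) two_pos hn (j + ((2 * t : ℕ) : Fin n)) ?_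
      calc j + ((2 * t : ℕ) : Fin n) + ((2 : ℕ) : Fin n) = j + ((2 * (t + 1) : ℕ) : Fin n) := by
            rw [add_assoc, ← Nat.cast_add]; rfl
        _ = j + ((2 * t : ℕ) : Fin n) := (inl_injective h).symm
    · rw [← hprev]; exact (GGP_adj_inl_inl_add_one σ (by omega) _).symm
    · rw [← hnext]; exact GGP_adj_inl_inl_add_one σ (by omega) _

lemma inr_apply_mem_pHull (hσ : ∀ x, σ (σ x) ≠ x) {x : Fin n} (hx : inr x ∈ pHull (GGP n σ) S)
    (hx₂ : inr (σ (σ x)) ∈ pHull (GGP n σ) S) : inr (σ x) ∈ pHull (GGP n σ) S :=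
  have hfix := Function.apply_ne_self_of_apply_apply_ne_self hσ
  mem_pHull_of_adj _ (fun h => hσ x (inr_injective h).symm) hx hx₂
    (GGP_adj_inr_inr_apply σ (hfix x)).symm (GGP_adj_inr_inr_apply σ (hfix (σ x)))

lemma inr_pow_apply_mem_pHull (hσ : ∀ x, σ (σ x) ≠ x) {b : Fin n}
    (hseeds : ∀ t < #(σ.cycleOf b).support / 2, inr ((σ ^ (2 * t + 1)) b) ∈ pHull (GGP n σ) S)
    (hb : Even #(σ.cycleOf b).support ∨ inl b ∈ pHull (GGP n σ) S) (m : ℕ) :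
    inr ((σ ^ m) b) ∈ pHull (GGP n σ) S := by
  set L := #(σ.cycleOf b).support
  have hsucc (m : ℕ) : (σ ^ (m + 1)) b = σ ((σ ^ m) b) := by rw [pow_succ', mul_apply]
  have hmod (m : ℕ) : (σ ^ (m % L)) b = (σ ^ m) b := pow_mod_card_support_cycleOf_self_apply σ m b
  have hL : 3 ≤ L := three_le_card_support_cycleOf hσ b
  have hodd {m : ℕ} (hm : m < L) (hmo : Odd m) : inr ((σ ^ m) b) ∈ pHull (GGP n σ) S := by
    obtain ⟨t, rfl⟩ := hmo
    exact hseeds t (by omega)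
  have hmid (m : ℕ) (hprev : inr ((σ ^ m) b) ∈ pHull (GGP n σ) S)
      (hnext : inr ((σ ^ (m + 2)) b) ∈ pHull (GGP n σ) S) :
      inr ((σ ^ (m + 1)) b) ∈ pHull (GGP n σ) S := by
    rw [hsucc (m + 1), hsucc] at hnext
    rw [hsucc]
    exact inr_apply_mem_pHull hσ hprev hnext
  have hbase : inr b ∈ pHull (GGP n σ) S := by
    rcases hb with ⟨s, hs⟩ | hinl
    · have h := hmid (L - 1) (hodd (by omega) ⟨s - 1, by omega⟩) (by
        rw [← hmod, show L - 1 + 2 = 1 + L by omega, Nat.add_mod_right, Nat.mod_eq_of_lt (by omega)]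
        exact hodd (by omega) odd_one)
      rwa [show L - 1 + 1 = L by omega, ← hmod, Nat.mod_self, pow_zero, one_apply] at h
    · have h1 := hodd (by omega) odd_one
      rw [pow_one] at h1
      exact mem_pHull_of_adj _ inl_ne_inr hinl h1 (GGP_adj_inl_inr σ b).symm
        (GGP_adj_inr_inr_apply σ (Function.apply_ne_self_of_apply_apply_ne_self hσ b))
  rw [← hmod]
  have hr : m % L < L := Nat.mod_lt m (by omega)
  obtain ⟨t, ht | ht⟩ := Nat.even_or_odd' (m % L)
  · rcases Nat.eq_zero_or_pos t with rfl | ht0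
    · rwa [ht, mul_zero, pow_zero, one_apply]
    have hnext : inr ((σ ^ (m % L - 1 + 2)) b) ∈ pHull (GGP n σ) S := by
      rcases (show m % L + 1 < L ∨ m % L + 1 = L by omega) with hlt | heq
      · exact hodd (by omega) ⟨t, by omega⟩
      · rwa [show m % L - 1 + 2 = L by omega, ← hmod, Nat.mod_self, pow_zero, one_apply]
    have h := hmid (m % L - 1) (hodd (by omega) ⟨t - 1, by omega⟩) hnext
    rwa [show m % L - 1 + 1 = m % L by omega] at h
  · exact hodd hr ⟨t, ht⟩

lemma pHull_GGP_eq_univ (hn : 2 ≤ n) (hinr : ∀ x, inr x ∈ pHull (GGP n σ) S) {x₀ : Fin n}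
    (hx₀ : inl x₀ ∈ pHull (GGP n σ) S) : pHull (GGP n σ) S = Set.univ := by
  have hpath (m : ℕ) : inl (x₀ + (m : Fin n)) ∈ pHull (GGP n σ) S := by
    induction m with
    | zero => simpa using hx₀
    | succ m ih =>
      rw [Nat.cast_succ, ← add_assoc]
      exact mem_pHull_of_adj _ inl_ne_inr ih (hinr _)
        (GGP_adj_inl_inl_add_one σ hn _).symm (GGP_adj_inl_inr σ _)
  refine Set.eq_univ_of_forall fun v => ?_
  rcases v with x | x
  · simpa using hpath (x - x₀).val
  · exact hinr x

lemma isHullSet_pathSeeds_disjSum_cycleSeeds (hn : 3 ≤ n) (hσ : ∀ x, σ (σ x) ≠ x) {j : Fin n}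
    {k : ℕ} {β : Perm (Fin n) → Fin n}
    (hβ : ∀ c ∈ σ.cycleFactorsFinset,
      β c ∈ c.support ∧ (Odd #c.support → ∃ i < k, β c = j + (i : Fin n))) :
    IsHullSet (GGP n σ) ↑((pathSeeds j k).disjSum (cycleSeeds σ β)) := by
  set H := pHull (GGP n σ) ↑((pathSeeds j k).disjSum (cycleSeeds σ β))
  have hseed (t : ℕ) (ht : 2 * t ≤ k) : inl (j + ((2 * t : ℕ) : Fin n)) ∈ H :=
    subset_pHull _ _ (by simpa [pathSeeds] using ⟨t, by omega, rfl⟩)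
  have hpath {i : ℕ} (hi : i < k) : inl (j + (i : Fin n)) ∈ H := inl_add_mem_pHull hn hseed hi
  have hcycle {c : Perm (Fin n)} (hc : c ∈ σ.cycleFactorsFinset) (m : ℕ) :
      inr ((σ ^ m) (β c)) ∈ H := by
    obtain ⟨hb, hbodd⟩ := hβ c hc
    have hcb : σ.cycleOf (β c) = c := (cycle_is_cycleOf hb hc).symm
    refine inr_pow_apply_mem_pHull hσ (fun t ht => subset_pHull _ _ ?_) ?_ m
    · rw [hcb] at ht
      simp only [mem_coe, inr_mem_disjSum, cycleSeeds, mem_biUnion, mem_image, mem_range]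
      exact ⟨c, hc, t, ht, rfl⟩
    · rw [hcb]
      refine (Nat.even_or_odd _).imp_right fun hodd => ?_
      obtain ⟨i, hi, hβi⟩ := hbodd hodd
      exact hβi ▸ hpath hi
  have hinr (y : Fin n) : inr y ∈ H := by
    have hc : σ.cycleOf y ∈ σ.cycleFactorsFinset :=
      cycleOf_mem_cycleFactorsFinset_iff.mpr
        (mem_support.mpr (Function.apply_ne_self_of_apply_apply_ne_self hσ y))
    obtain ⟨m, hm⟩ := (mem_support_cycleOf_iff.mp (hβ _ hc).1).1.symm.exists_nat_pow_eq
    exact hm ▸ hcycle hc m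
  exact isHullSet_of_pHull_eq_univ _ (pHull_GGP_eq_univ (by omega) hinr (hseed 0 k.zero_le))

lemma card_pathSeeds_disjSum_cycleSeeds_le (hfix : ∀ x, σ x ≠ x) {k : ℕ}
    (hk : k = Multiset.card (σ.cycleType.filter Odd)) (j : Fin n) (β : Perm (Fin n) → Fin n) :
    #((pathSeeds j k).disjSum (cycleSeeds σ β)) ≤ (n + 2) / 2 := by
  have hsupp : #σ.support = n := by
    rw [eq_univ_of_forall fun x => mem_support.mpr (hfix x), card_univ, Fintype.card_fin]
  have hcount := Multiset.two_mul_sum_map_div_two_add_card_filter_odd σ.cycleType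
  rw [sum_cycleType, hsupp, ← hk] at hcount
  have hpath : #(pathSeeds j k) ≤ k / 2 + 1 := card_image_le.trans (card_range _).le
  have hcycle := card_cycleSeeds_le σ β
  rw [card_disjSum]
  omega

end Seeds

theorem stmt19_general (n : ℕ) [NeZero n] (hn : 3 ≤ n) (σ : Equiv.Perm (Fin n))
    (hfix : ∀ i, σ i ≠ i)
    (hlen : ∀ c ∈ σ.cycleType, 3 ≤ c)
    (k : ℕ) (hk : k = Multiset.card (σ.cycleType.filter (fun m => Odd m)))
    (hpath : ∃ j : Fin n,
      (∀ i : ℕ, i < k → Odd (σ.cycleOf (j + (i : Fin n))).support.card) ∧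
      (∀ i₁ i₂ : ℕ, i₁ < k → i₂ < k → i₁ ≠ i₂ →
        σ.cycleOf (j + (i₁ : Fin n)) ≠ σ.cycleOf (j + (i₂ : Fin n)))) :
    hullNumber (GGP n σ) = (n + 2) / 2 := by
  obtain ⟨j, hodd, hdist⟩ := hpath
  have hσ (x : Fin n) : σ (σ x) ≠ x := σ.apply_apply_ne_self hlen (hfix x)
  have hbase (c : Equiv.Perm (Fin n)) (hc : c ∈ σ.cycleFactorsFinset) : ∃ b ∈ c.support,
      Odd c.support.card → ∃ i < k, b = j + (i : Fin n) := by
    by_cases hco : Odd c.support.card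
    · obtain ⟨i, hi, hmem⟩ := σ.exists_mem_support_of_odd hk.ge hodd hdist hc hco
      exact ⟨_, hmem, fun _ => ⟨i, hi, rfl⟩⟩
    · obtain ⟨b, hb⟩ := (Equiv.Perm.mem_cycleFactorsFinset_iff.mp hc).1.nonempty_support
      exact ⟨b, hb, fun h => absurd h hco⟩
  choose! β hβ using hbase
  have hcard := card_pathSeeds_disjSum_cycleSeeds_le hfix hk j β
  refine hullNumber_eq_of_forall _
    (by rw [Nat.card_eq_fintype_card, Fintype.card_sum, Fintype.card_fin]; omega)
    ⟨_, by rwa [Set.ncard_coe_finset], isHullSet_pathSeeds_disjSum_cycleSeeds hn hσ hβ⟩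
    fun _ => le_ncard_of_isHullSet_GGP σ hn hσ

theorem stmt19 (n : ℕ) [NeZero n] (hn : 3 ≤ n) (σ : Equiv.Perm (Fin n))
    (hσ : σ ≠ 1) (hfix : ∀ i, σ i ≠ i)
    (hlen : ∀ c ∈ σ.cycleType, 3 ≤ c)
    (k : ℕ) (hk : k = Multiset.card (σ.cycleType.filter (fun m => Odd m)))
    (hpath : ∃ j : Fin n,
      (∀ i : ℕ, i < k → Odd (σ.cycleOf (j + (i : Fin n))).support.card) ∧
      (∀ i₁ i₂ : ℕ, i₁ < k → i₂ < k → i₁ ≠ i₂ →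
        σ.cycleOf (j + (i₁ : Fin n)) ≠ σ.cycleOf (j + (i₂ : Fin n)))) :
    hullNumber (GGP n σ) = (n + 2) / 2 :=
  stmt19_general n hn σ hfix hlen k hk hpath
end
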